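/- arXiv:1606.03563 — 2 statements merged into one kernel-verified Lean document; each statement's English description precedes it below -/
import Mathlib

section
/- Fix n ≥ 3 and i < j in {1,…,n}. If β and β′ are words in the generators of G_n^2 that are both in good condition and represent the same element of G_n^2, then w_{(i,j)}(β) = w_{(i,j)}(β′) in F_n^2. In other words, w_{(i,j)} is a well-defined invariant on the subgroup of good-condition elements of G_n^2. -/
namespace GnkBrunnian

/-! ## Index types for generators -/

/-- Validity of a pair index: `1 ≤ i < j ≤ n`. -/
abbrev P2ok (n : ℕ) (p : ℕ × ℕ) : Prop := 1 ≤ p.1 ∧ p.1 < p.2 ∧ p.2 ≤ n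

/-- Index type for the generators `a_{ij}` of `G_n^2` (and `b_{ij}` of `PB_n`). -/
abbrev PIdx (n : ℕ) := {p : ℕ × ℕ // P2ok n p}

/-- Validity of a triple index: `1 ≤ i < j < k ≤ n`. -/
abbrev T3ok (n : ℕ) (t : ℕ × ℕ × ℕ) : Prop :=
  1 ≤ t.1 ∧ t.1 < t.2.1 ∧ t.2.1 < t.2.2 ∧ t.2.2 ≤ n

/-- Index type for the generators `a_{ijk}` of `G_n^3`. -/
abbrev TIdx (n : ℕ) := {t : ℕ × ℕ × ℕ // T3ok n t}

def sort2 (a b : ℕ) : ℕ × ℕ := (min a b, max a b)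

def sort3 (a b c : ℕ) : ℕ × ℕ × ℕ :=
  (min a (min b c), a + b + c - min a (min b c) - max a (max b c), max a (max b c))

def pairSet {n : ℕ} (p : PIdx n) : Finset ℕ := {p.1.1, p.1.2}

def tripSet {n : ℕ} (t : TIdx n) : Finset ℕ := {t.1.1, t.1.2.1, t.1.2.2}

/-- Reindexing after deleting the strand `m` : indices above `m` are decreased by one. -/
def del (m x : ℕ) : ℕ := if m < x then x - 1 else x

/-! ## The group `G_n^2` -/

/-- The free-group letter `a_{\{a,b\}}` (trivial if the index is out of range). -/
def fgen2 (n a b : ℕ) : FreeGroup (PIdx n) :=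
  if h : P2ok n (sort2 a b) then FreeGroup.of ⟨sort2 a b, h⟩ else 1

/-- The defining relators of `G_n^2`. -/
def rels2 (n : ℕ) : Set (FreeGroup (PIdx n)) :=
  {r | ∃ a : PIdx n, r = .of a * .of a} ∪
  {r | ∃ i j k l : ℕ,
      1 ≤ i ∧ i ≤ n ∧ 1 ≤ j ∧ j ≤ n ∧ 1 ≤ k ∧ k ≤ n ∧ 1 ≤ l ∧ l ≤ n ∧
      i ≠ j ∧ i ≠ k ∧ i ≠ l ∧ j ≠ k ∧ j ≠ l ∧ k ≠ l ∧
      r = fgen2 n i j * fgen2 n k l * (fgen2 n i j)⁻¹ * (fgen2 n k l)⁻¹} ∪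
  {r | ∃ i j k : ℕ,
      1 ≤ i ∧ i ≤ n ∧ 1 ≤ j ∧ j ≤ n ∧ 1 ≤ k ∧ k ≤ n ∧ i ≠ j ∧ i ≠ k ∧ j ≠ k ∧
      r = fgen2 n i j * fgen2 n i k * fgen2 n j k *
          (fgen2 n j k * fgen2 n i k * fgen2 n i j)⁻¹}

/-- The group `G_n^2`. -/
abbrev G2 (n : ℕ) := PresentedGroup (rels2 n)

/-- The generator `a_{\{a,b\}}` of `G_n^2` (trivial if the index is out of range). -/
def ggen2 (n a b : ℕ) : G2 n :=
  if h : P2ok n (sort2 a b) then PresentedGroup.of ⟨sort2 a b, h⟩ else 1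

/-- The element of `G_n^2` represented by a word in the generators. -/
def toG2 {n : ℕ} (β : List (PIdx n)) : G2 n :=
  (β.map fun a => (PresentedGroup.of a : G2 n)).prod

/-! ## The group `G_n^3` -/

/-- The free-group letter `a_{\{a,b,c\}}` (trivial if the index is out of range). -/
def fgen3 (n a b c : ℕ) : FreeGroup (TIdx n) :=
  if h : T3ok n (sort3 a b c) then FreeGroup.of ⟨sort3 a b c, h⟩ else 1

/-- The defining relators of `G_n^3`. -/
def rels3 (n : ℕ) : Set (FreeGroup (TIdx n)) :=
  {r | ∃ a : TIdx n, r = .of a * .of a} ∪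
  {r | ∃ a b : TIdx n, (tripSet a ∩ tripSet b).card < 2 ∧
      r = .of a * .of b * (.of a)⁻¹ * (.of b)⁻¹} ∪
  {r | ∃ i j k l : ℕ,
      1 ≤ i ∧ i ≤ n ∧ 1 ≤ j ∧ j ≤ n ∧ 1 ≤ k ∧ k ≤ n ∧ 1 ≤ l ∧ l ≤ n ∧
      i ≠ j ∧ i ≠ k ∧ i ≠ l ∧ j ≠ k ∧ j ≠ l ∧ k ≠ l ∧
      r = fgen3 n i j k * fgen3 n i j l * fgen3 n i k l * fgen3 n j k l *
          (fgen3 n j k l * fgen3 n i k l * fgen3 n i j l * fgen3 n i j k)⁻¹}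

/-- The group `G_n^3`. -/
abbrev G3 (n : ℕ) := PresentedGroup (rels3 n)

/-- The generator `a_{\{a,b,c\}}` of `G_n^3` (trivial if the index is out of range). -/
def ggen3 (n a b c : ℕ) : G3 n :=
  if h : T3ok n (sort3 a b c) then PresentedGroup.of ⟨sort3 a b c, h⟩ else 1

/-- The element of `G_n^3` represented by a word in the generators. -/
def toG3 {n : ℕ} (β : List (TIdx n)) : G3 n :=
  (β.map fun a => (PresentedGroup.of a : G3 n)).prod

/-! ## The pure braid group `PB_n` (standard Artin/Birman presentation) -/

/-- The defining relators of the pure braid group on `n` strands, in the standard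
presentation on the generators `b_{ij} = A_{ij}`, `1 ≤ i < j ≤ n`. -/
def relsPB (n : ℕ) : Set (FreeGroup (PIdx n)) :=
  {x | ∃ r s i j : ℕ, P2ok n (r, s) ∧ P2ok n (i, j) ∧ (s < i ∨ (i < r ∧ s < j)) ∧
      x = (fgen2 n r s)⁻¹ * fgen2 n i j * fgen2 n r s * (fgen2 n i j)⁻¹} ∪
  {x | ∃ r s j : ℕ, 1 ≤ r ∧ r < s ∧ s < j ∧ j ≤ n ∧
      x = (fgen2 n r s)⁻¹ * fgen2 n s j * fgen2 n r s *
          (fgen2 n r j * fgen2 n s j * (fgen2 n r j)⁻¹)⁻¹} ∪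
  {x | ∃ r s j : ℕ, 1 ≤ r ∧ r < s ∧ s < j ∧ j ≤ n ∧
      x = (fgen2 n r s)⁻¹ * fgen2 n r j * fgen2 n r s *
          ((fgen2 n r j * fgen2 n s j) * fgen2 n r j * (fgen2 n r j * fgen2 n s j)⁻¹)⁻¹} ∪
  {x | ∃ r i s j : ℕ, 1 ≤ r ∧ r < i ∧ i < s ∧ s < j ∧ j ≤ n ∧
      x = (fgen2 n r s)⁻¹ * fgen2 n i j * fgen2 n r s *
          ((fgen2 n r j * fgen2 n s j * (fgen2 n r j)⁻¹ * (fgen2 n s j)⁻¹) * fgen2 n i j *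
           (fgen2 n r j * fgen2 n s j * (fgen2 n r j)⁻¹ * (fgen2 n s j)⁻¹)⁻¹)⁻¹}

/-- The pure braid group on `n` strands. -/
abbrev PB (n : ℕ) := PresentedGroup (relsPB n)

/-- The standard generator `b_{ij}` of `PB_n` (trivial if the index is out of range). -/
def pbgen (n a b : ℕ) : PB n :=
  if h : P2ok n (sort2 a b) then PresentedGroup.of ⟨sort2 a b, h⟩ else 1

/-! ## The elements `c^n_{i,j}` and the homomorphism `φ_n` -/

/-- `c^n_{i,j} = (∏_{k=j+1}^{n} a_{ijk}) * (∏_{k=1, k∉{i,j}}^{j-1} a_{ijk}) ∈ G_n^3`. -/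
def cElt (n i j : ℕ) : G3 n :=
  (((List.range' (j + 1) (n - j)).map fun k => ggen3 n i j k).prod) *
  (((List.range' 1 (j - 1)).map fun k => ggen3 n i j k).prod)

/-- The image of `b_{ij}` under `φ_n`:
`(c^n_{i,i+1})⁻¹ ⋯ (c^n_{i,j-1})⁻¹ (c^n_{i,j})² c^n_{i,j-1} ⋯ c^n_{i,i+1}`. -/
def phiElt (n i j : ℕ) : G3 n :=
  (((List.range' (i + 1) (j - 1 - i)).map fun m => (cElt n i m)⁻¹).prod) *
  (cElt n i j) ^ 2 *
  (((List.range' (i + 1) (j - 1 - i)).reverse.map fun m => cElt n i m).prod)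

/-- `q` is the strand-deletion homomorphism `q_m : G_n^3 → G_{n-1}^3`. -/
def IsShift3 (n m : ℕ) (q : G3 n →* G3 (n - 1)) : Prop :=
  ∀ i j k : ℕ, 1 ≤ i → i < j → j < k → k ≤ n →
    q (ggen3 n i j k) =
      if m = i ∨ m = j ∨ m = k then 1
      else ggen3 (n - 1) (del m i) (del m j) (del m k)

/-- `p` is the strand-deletion homomorphism `p_m : PB_n → PB_{n-1}`. -/
def IsShiftPB (n m : ℕ) (p : PB n →* PB (n - 1)) : Prop :=
  ∀ i j : ℕ, 1 ≤ i → i < j → j ≤ n →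
    p (pbgen n i j) =
      if m = i ∨ m = j then 1 else pbgen (n - 1) (del m i) (del m j)

/-- `φ` is the Manturov–Nikonov homomorphism `φ_n : PB_n → G_n^3`. -/
def IsPhi (n : ℕ) (φ : PB n →* G3 n) : Prop :=
  ∀ i j : ℕ, 1 ≤ i → i < j → j ≤ n → φ (pbgen n i j) = phiElt n i j

/-! ## Words and good condition -/

def good2 {n : ℕ} (β : List (PIdx n)) : Prop := ∀ a : PIdx n, Even (β.count a)

def good3 {n : ℕ} (β : List (TIdx n)) : Prop := ∀ a : TIdx n, Even (β.count a)

/-! ## Free products of copies of `ℤ/2` -/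

/-- The free product of copies of `ℤ/2ℤ` indexed by `ι`. -/
abbrev FP2 (ι : Type) := PresentedGroup {r : FreeGroup ι | ∃ a : ι, r = .of a * .of a}

/-- Indices `l ∈ {1,…,n} \ {i,j,k}`. -/
abbrev SIdx3 (n i j k : ℕ) := {l : ℕ // (1 ≤ l ∧ l ≤ n) ∧ l ≠ i ∧ l ≠ j ∧ l ≠ k}

/-- The group `F_n^3` (for the fixed triple `(i,j,k)`). -/
abbrev F3 (n i j k : ℕ) := FP2 (SIdx3 n i j k → ZMod 2 × ZMod 2)

/-- Indices `k ∈ {1,…,n} \ {i,j}`. -/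
abbrev SIdx2 (n i j : ℕ) := {l : ℕ // (1 ≤ l ∧ l ≤ n) ∧ l ≠ i ∧ l ≠ j}

/-- The group `F_n^2` (for the fixed pair `(i,j)`). -/
abbrev F2 (n i j : ℕ) := FP2 (SIdx2 n i j → ZMod 2)

/-! ## The MN-invariants `w_{(i,j)}` and `w_{(i,j,k)}` -/

/-- The number of occurrences of the generator `a_{\{a,b\}}` in a word over `G_n^2`. -/
def cnt2 {n : ℕ} (β : List (PIdx n)) (a b : ℕ) : ℕ :=
  (β.filter fun x => decide (pairSet x = ({a, b} : Finset ℕ))).length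

/-- The number of occurrences of the generator `a_{\{a,b,c\}}` in a word over `G_n^3`. -/
def cnt3 {n : ℕ} (β : List (TIdx n)) (a b c : ℕ) : ℕ :=
  (β.filter fun x => decide (tripSet x = ({a, b, c} : Finset ℕ))).length

/-- `i_c` for an occurrence of `a_{ij}` with prefix `pre`: `i_c(k) = N_{ik} + N_{jk} (mod 2)`. -/
def iC2 {n : ℕ} (i j : ℕ) (pre : List (PIdx n)) : SIdx2 n i j → ZMod 2 :=
  fun k => ((cnt2 pre i k.1 + cnt2 pre j k.1 : ℕ) : ZMod 2)

/-- The MN-invariant `w_{(i,j)}` of a word over `G_n^2`. -/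
def w2 {n : ℕ} (i j : ℕ) (β : List (PIdx n)) : F2 n i j :=
  ((((List.range β.length).zip β).filter fun x => decide (pairSet x.2 = ({i, j} : Finset ℕ))).map
    fun x => (PresentedGroup.of (iC2 i j (β.take x.1)) : F2 n i j)).prod

/-- `i_c` for an occurrence of `a_{ijk}` with prefix `pre`:
`i_c(l) = (N_{jkl} + N_{ijl}, N_{ikl} + N_{ijl}) (mod 2)`. -/
def iC3 {n : ℕ} (i j k : ℕ) (pre : List (TIdx n)) : SIdx3 n i j k → ZMod 2 × ZMod 2 :=
  fun l => (((cnt3 pre j k l.1 + cnt3 pre i j l.1 : ℕ) : ZMod 2),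
            ((cnt3 pre i k l.1 + cnt3 pre i j l.1 : ℕ) : ZMod 2))

/-- The MN-invariant `w_{(i,j,k)}` of a word over `G_n^3`. -/
def w3 {n : ℕ} (i j k : ℕ) (β : List (TIdx n)) : F3 n i j k :=
  ((((List.range β.length).zip β).filter fun x => decide (tripSet x.2 = ({i, j, k} : Finset ℕ))).map
    fun x => (PresentedGroup.of (iC3 i j k (β.take x.1)) : F3 n i j k)).prod

/-! ## Explicit words for `c^n_{i,j}` and `φ_n(b_{ij})` -/

def tripMkS (n a b c : ℕ) : Option (TIdx n) :=
  if h : T3ok n (sort3 a b c) then some ⟨sort3 a b c, h⟩ else none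

def pairMkS (n a b : ℕ) : Option (PIdx n) :=
  if h : P2ok n (sort2 a b) then some ⟨sort2 a b, h⟩ else none

/-- The defining word of `c^n_{i,j}`. -/
def cWord (n i j : ℕ) : List (TIdx n) :=
  ((List.range' (j + 1) (n - j)).filterMap fun k => tripMkS n i j k) ++
  ((List.range' 1 (j - 1)).filterMap fun k => tripMkS n i j k)

/-- The defining word of `φ_n(b_{ij})`, with the inverses of the `c`-words expanded using
`a⁻¹ = a` for generators (i.e. by reversing the words). -/
def phiWord (n i j : ℕ) : List (TIdx n) :=
  (((List.range' (i + 1) (j - 1 - i)).map fun m => (cWord n i m).reverse).flatten) ++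
  cWord n i j ++ cWord n i j ++
  (((List.range' (i + 1) (j - 1 - i)).reverse.map fun m => cWord n i m).flatten)

/-! ## The group `G_{n,p}^2` (parity) -/

/-- Index type for the generators `a_{ij}^ε` of `G_{n,p}^2`. -/
abbrev PPIdx (n : ℕ) := PIdx n × ZMod 2

def fgenP2 (n a b : ℕ) (e : ZMod 2) : FreeGroup (PPIdx n) :=
  if h : P2ok n (sort2 a b) then FreeGroup.of (⟨sort2 a b, h⟩, e) else 1

/-- The defining relators of `G_{n,p}^2`. -/
def relsP2 (n : ℕ) : Set (FreeGroup (PPIdx n)) :=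
  {r | ∃ a : PPIdx n, r = .of a * .of a} ∪
  {r | ∃ (i j k l : ℕ) (e e' : ZMod 2),
      1 ≤ i ∧ i ≤ n ∧ 1 ≤ j ∧ j ≤ n ∧ 1 ≤ k ∧ k ≤ n ∧ 1 ≤ l ∧ l ≤ n ∧
      i ≠ j ∧ i ≠ k ∧ i ≠ l ∧ j ≠ k ∧ j ≠ l ∧ k ≠ l ∧
      r = fgenP2 n i j e * fgenP2 n k l e' * (fgenP2 n i j e)⁻¹ * (fgenP2 n k l e')⁻¹} ∪
  {r | ∃ (i j k : ℕ) (e1 e2 e3 : ZMod 2),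
      1 ≤ i ∧ i < j ∧ j < k ∧ k ≤ n ∧ e1 + e2 + e3 = 0 ∧
      r = fgenP2 n i j e1 * fgenP2 n i k e2 * fgenP2 n j k e3 *
          (fgenP2 n j k e3 * fgenP2 n i k e2 * fgenP2 n i j e1)⁻¹}

/-- The group `G_{n,p}^2`. -/
abbrev GP2 (n : ℕ) := PresentedGroup (relsP2 n)

/-- The element of `G_{n,p}^2` represented by a word in the generators. -/
def toGP2 {n : ℕ} (β : List (PPIdx n)) : GP2 n :=
  (β.map fun a => (PresentedGroup.of a : GP2 n)).prod

/-! ## The parity invariant `w^p_{ij}` on `G_{n,p}^2` -/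

/-- The number of occurrences of `a_{\{a,b\}}^e` in a word over `G_{n,p}^2`. -/
def cntP2 {n : ℕ} (β : List (PPIdx n)) (a b : ℕ) (e : ZMod 2) : ℕ :=
  (β.filter fun x => decide (pairSet x.1 = ({a, b} : Finset ℕ) ∧ x.2 = e)).length

/-- `i^p_c` for an occurrence of `a_{ij}^e` with prefix `pre`. -/
def iCP2 {n : ℕ} (i j : ℕ) (e : ZMod 2) (pre : List (PPIdx n)) : SIdx2 n i j → ZMod 2 :=
  fun k =>
    if e = 0 then ((cntP2 pre i k.1 0 + cntP2 pre j k.1 0 : ℕ) : ZMod 2)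
    else ((cntP2 pre i k.1 0 + cntP2 pre j k.1 1 : ℕ) : ZMod 2)

/-- The invariant `w^p_{ij}` of a word over `G_{n,p}^2`. -/
def wP2 {n : ℕ} (i j : ℕ) (β : List (PPIdx n)) : F2 n i j :=
  ((((List.range β.length).zip β).filter fun x => decide (pairSet x.2.1 = ({i, j} : Finset ℕ))).map
    fun x => (PresentedGroup.of (iCP2 i j x.2.2 (β.take x.1)) : F2 n i j)).prod

/-! ## The map `ψ_l : G_{n+1}^2 → G_{n,p}^2` -/

/-- The word over `G_{n,p}^2` obtained from a word over `G_{n+1}^2` by deleting the strand `l`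
and recording parities. -/
def psiWord (n l : ℕ) (β : List (PIdx (n + 1))) : List (PPIdx n) :=
  ((List.range β.length).zip β).filterMap fun x =>
    if l = x.2.1.1 ∨ l = x.2.1.2 then none
    else (pairMkS n (del l x.2.1.1) (del l x.2.1.2)).map fun p =>
      (p, ((cnt2 (β.take x.1) x.2.1.1 l + cnt2 (β.take x.1) x.2.1.2 l : ℕ) : ZMod 2))

/-! ## The group `G_{n,p}^3` (parity) -/

/-- Index type for the generators `a_{ijk}^ε` of `G_{n,p}^3`. -/
abbrev TPIdx (n : ℕ) := TIdx n × ZMod 2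

def fgenP3 (n a b c : ℕ) (e : ZMod 2) : FreeGroup (TPIdx n) :=
  if h : T3ok n (sort3 a b c) then FreeGroup.of (⟨sort3 a b c, h⟩, e) else 1

/-- The defining relators of `G_{n,p}^3`. -/
def relsP3 (n : ℕ) : Set (FreeGroup (TPIdx n)) :=
  {r | ∃ a : TPIdx n, r = .of a * .of a} ∪
  {r | ∃ a b : TPIdx n, (tripSet a.1 ∩ tripSet b.1).card < 2 ∧
      r = (.of a * .of b) ^ 2} ∪
  {r | ∃ (i j k l : ℕ) (ei ej ek el : ZMod 2),
      1 ≤ i ∧ i ≤ n ∧ 1 ≤ j ∧ j ≤ n ∧ 1 ≤ k ∧ k ≤ n ∧ 1 ≤ l ∧ l ≤ n ∧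
      i ≠ j ∧ i ≠ k ∧ i ≠ l ∧ j ≠ k ∧ j ≠ l ∧ k ≠ l ∧
      (if max (max i j) (max k l) = i then ej + ek + el
       else if max (max i j) (max k l) = j then ei + ek + el
       else if max (max i j) (max k l) = k then ei + ej + el
       else ei + ej + ek) = 0 ∧
      r = (fgenP3 n i j k el * fgenP3 n i j l ek * fgenP3 n i k l ej * fgenP3 n j k l ei) ^ 2}

/-- The group `G_{n,p}^3`. -/
abbrev GP3 (n : ℕ) := PresentedGroup (relsP3 n)

/-- The element of `G_{n,p}^3` represented by a word in the generators. -/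
def toGP3 {n : ℕ} (β : List (TPIdx n)) : GP3 n :=
  (β.map fun a => (PresentedGroup.of a : GP3 n)).prod

/-! ## The map `f : G_{n+1}^3 → G_{n,p}^3` -/

/-- The word over `G_{n,p}^3` obtained from a word over `G_{n+1}^3` by deleting the letters
containing the index `n+1` and recording parities. -/
def fWord (n : ℕ) (β : List (TIdx (n + 1))) : List (TPIdx n) :=
  ((List.range β.length).zip β).filterMap fun x =>
    if x.2.1.2.2 = n + 1 then none
    else (tripMkS n x.2.1.1 x.2.1.2.1 x.2.1.2.2).map fun t =>
      (t, ((cnt3 (β.take x.1) x.2.1.2.1 x.2.1.2.2 (n + 1) +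
            cnt3 (β.take x.1) x.2.1.1 x.2.1.2.2 (n + 1) : ℕ) : ZMod 2))

/-! ## The parity invariant `w^p_{ijk}` on `G_{n,p}^3` -/

/-- The group `F_n^3` with values in `ℤ/2` (for the parity invariant). -/
abbrev F3p (n i j k : ℕ) := FP2 (SIdx3 n i j k → ZMod 2)

/-- The number of occurrences of `a_{\{a,b,c\}}^e` in a word over `G_{n,p}^3`. -/
def cntP3 {n : ℕ} (β : List (TPIdx n)) (a b c : ℕ) (e : ZMod 2) : ℕ :=
  (β.filter fun x => decide (tripSet x.1 = ({a, b, c} : Finset ℕ) ∧ x.2 = e)).length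

/-- `i^p_c` for an occurrence of `a_{ijk}^e` with prefix `pre` (here `k > i, j`). -/
def iCP3 {n : ℕ} (i j k : ℕ) (e : ZMod 2) (pre : List (TPIdx n)) : SIdx3 n i j k → ZMod 2 :=
  fun l =>
    if e = 0 then
      (if k < l.1 then
        ((cntP3 pre i k l.1 0 + cntP3 pre j k l.1 0 + cntP3 pre i j l.1 1 : ℕ) : ZMod 2)
      else ((cntP3 pre i k l.1 0 + cntP3 pre j k l.1 0 : ℕ) : ZMod 2))
    else
      (if k < l.1 then
        ((cntP3 pre i k l.1 0 + cntP3 pre j k l.1 1 + cntP3 pre i j l.1 0 : ℕ) : ZMod 2)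
      else ((cntP3 pre i k l.1 0 + cntP3 pre j k l.1 1 : ℕ) : ZMod 2))

/-- The invariant `w^p_{ijk}` of a word over `G_{n,p}^3`. -/
def wP3 {n : ℕ} (i j k : ℕ) (β : List (TPIdx n)) : F3p n i j k :=
  ((((List.range β.length).zip β).filter fun x => decide (tripSet x.2.1 = ({i, j, k} : Finset ℕ))).map
    fun x => (PresentedGroup.of (iCP3 i j k x.2.2 (β.take x.1)) : F3p n i j k)).prod

/-!
Reading a word from left to right, `w_{(i,j)}` only depends on the running value of `i_c`, a
vector in `(ℤ/2)^{\{1,…,n\}∖\{i,j\}}` to which each letter `a_{st} ≠ a_{ij}` adds a fixed vector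
`δ_{st}` (the value of `i_c` on the one-letter word `a_{st}`). Let this vector group act on
`F_n^2` by translating the free generators, and send `a_{ij}` to `(σ_0, 0)`, where `σ_0` is the
generator indexed by the zero vector, and `a_{st}` to `(1, δ_{st})` in the semidirect product.
A word `β` then goes to `(w_{(i,j)}(β), i_c(β))`, and the defining relations of `G_n^2` hold in
the target: in a triangle relation containing `a_{ij}`, the other two letters `a_{iz}`, `a_{jz}`
have the same `δ`, supported at `z`. Hence `w_{(i,j)}` factors through a homomorphism on `G_n^2`.
-/

theorem finset_pair_eq_pair_iff {α : Type*} [DecidableEq α] {a b c d : α} :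
    ({a, b} : Finset α) = {c, d} ↔ (a = c ∧ b = d) ∨ (a = d ∧ b = c) := by
  rw [← Finset.coe_inj, Finset.coe_pair, Finset.coe_pair, Set.pair_eq_pair_iff]

namespace FP2

variable {ι X : Type}

theorem of_mul_self (a : ι) : (PresentedGroup.of a : FP2 ι) * PresentedGroup.of a = 1 :=
  PresentedGroup.one_of_mem ⟨a, rfl⟩

variable [AddGroup X]

def translate (v : X) : FP2 X →* FP2 X :=
  PresentedGroup.toGroup (f := fun x => PresentedGroup.of (v + x)) (by
    rintro _ ⟨a, rfl⟩
    simpa using of_mul_self (v + a))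

@[simp] theorem translate_of (v x : X) :
    translate v (PresentedGroup.of x) = PresentedGroup.of (v + x) :=
  PresentedGroup.toGroup.of _

theorem translate_add (v w : X) : translate (v + w) = (translate v).comp (translate w) :=
  PresentedGroup.ext fun x => by simp [add_assoc]

theorem translate_zero : translate (0 : X) = MonoidHom.id (FP2 X) :=
  PresentedGroup.ext fun x => by simp

def translateAut : Multiplicative X →* MulAut (FP2 X) where
  toFun v := MonoidHom.toMulEquiv (translate v.toAdd) (translate (-v.toAdd))
    (by rw [← translate_add, neg_add_cancel, translate_zero])
    (by rw [← translate_add, add_neg_cancel, translate_zero])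
  map_one' := MulEquiv.ext fun x => by simp [translate_zero]
  map_mul' v w := MulEquiv.ext fun x => by simp [translate_add]

@[simp] theorem translateAut_of (v x : X) :
    translateAut (Multiplicative.ofAdd v) (PresentedGroup.of x) = PresentedGroup.of (v + x) :=
  translate_of v x

end FP2

section Words

variable {n : ℕ} (i j : ℕ)

theorem cnt2_append (β γ : List (PIdx n)) (a b : ℕ) :
    cnt2 (β ++ γ) a b = cnt2 β a b + cnt2 γ a b := by
  simp [cnt2]

theorem cnt2_singleton (p : PIdx n) (a b : ℕ) :
    cnt2 [p] a b = if pairSet p = {a, b} then 1 else 0 := by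
  by_cases h : pairSet p = {a, b} <;> simp [cnt2, h]

theorem iC2_append (β γ : List (PIdx n)) : iC2 i j (β ++ γ) = iC2 i j β + iC2 i j γ := by
  funext k
  simp only [iC2, cnt2_append, Pi.add_apply]
  push_cast
  ring

theorem iC2_singleton_apply (p : PIdx n) (k : SIdx2 n i j) :
    iC2 i j [p] k =
      (if pairSet p = {i, k.1} then 1 else 0) + (if pairSet p = {j, k.1} then 1 else 0) := by
  simp only [iC2, cnt2_singleton]
  split_ifs <;> push_cast <;> ring

theorem iC2_singleton_of_disjoint (p : PIdx n) (hi : i ∉ pairSet p) (hj : j ∉ pairSet p) :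
    iC2 i j [p] = 0 := by
  funext k
  have hik : pairSet p ≠ {i, k.1} := fun h => hi (by simp [h])
  have hjk : pairSet p ≠ {j, k.1} := fun h => hj (by simp [h])
  simp [iC2_singleton_apply, hik, hjk]

theorem iC2_singleton_of_eq (p : PIdx n) (hp : pairSet p = {i, j}) : iC2 i j [p] = 0 := by
  funext k
  obtain ⟨-, hki, hkj⟩ := k.2
  have hik : ({i, j} : Finset ℕ) ≠ {i, k.1} := by rw [ne_eq, finset_pair_eq_pair_iff]; omega
  have hjk : ({i, j} : Finset ℕ) ≠ {j, k.1} := by rw [ne_eq, finset_pair_eq_pair_iff]; omega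
  simp [iC2_singleton_apply, hp, hik, hjk]

theorem iC2_singleton_eq_of_pair {x y z : ℕ} (hxy : ({x, y} : Finset ℕ) = {i, j})
    (q r : PIdx n) (hq : pairSet q = {x, z}) (hr : pairSet r = {y, z}) :
    iC2 i j [q] = iC2 i j [r] := by
  funext k
  obtain ⟨-, hki, hkj⟩ := k.2
  rw [finset_pair_eq_pair_iff] at hxy
  simp only [iC2_singleton_apply, hq, hr, finset_pair_eq_pair_iff]
  rcases hxy with ⟨rfl, rfl⟩ | ⟨rfl, rfl⟩ <;> by_cases hz : z = k.1 <;>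
    by_cases hyx : y = x <;> simp [Ne.symm hki, Ne.symm hkj, *] <;> omega

theorem w2_append_singleton (β : List (PIdx n)) (a : PIdx n) :
    w2 i j (β ++ [a]) = w2 i j β *
      if pairSet a = {i, j} then (PresentedGroup.of (iC2 i j β) : F2 n i j) else 1 := by
  unfold w2
  rw [List.length_append, List.length_singleton, List.range_succ,
    List.zip_append (by simp), List.filter_append, List.map_append, List.prod_append]
  congr 1
  · refine congrArg List.prod (List.map_congr_left fun x hx => ?_)
    have hlt : x.1 < β.length :=
      List.mem_range.1 (List.of_mem_zip (List.mem_of_mem_filter hx)).1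
    rw [List.take_append_of_le_length hlt.le]
  · by_cases h : pairSet a = {i, j} <;> simp [h]

end Words

theorem exists_fgen2_eq_of {n a b : ℕ} (ha : 1 ≤ a) (ha' : a ≤ n) (hb : 1 ≤ b)
    (hb' : b ≤ n) (hab : a ≠ b) :
    ∃ p : PIdx n, fgen2 n a b = .of p ∧ pairSet p = {a, b} := by
  have hp : P2ok n (sort2 a b) := by simp only [P2ok, sort2]; omega
  refine ⟨⟨sort2 a b, hp⟩, dif_pos hp, ?_⟩
  simp only [pairSet, sort2, finset_pair_eq_pair_iff]
  omega

theorem toG2_append_singleton {n : ℕ} (β : List (PIdx n)) (a : PIdx n) :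
    toG2 (β ++ [a]) = toG2 β * PresentedGroup.of a := by
  simp [toG2]

section Invariant

open SemidirectProduct

variable {n : ℕ} (i j : ℕ)

abbrev F2Ext (n i j : ℕ) :=
  F2 n i j ⋊[FP2.translateAut] Multiplicative (SIdx2 n i j → ZMod 2)

def genImage (p : PIdx n) : F2Ext n i j :=
  if pairSet p = {i, j} then inl (PresentedGroup.of 0)
  else inr (Multiplicative.ofAdd (iC2 i j [p]))

theorem genImage_mul_self (p : PIdx n) : genImage i j p * genImage i j p = 1 := by
  unfold genImage
  split_ifs
  · rw [← map_mul, FP2.of_mul_self, map_one]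
  · have hp : iC2 i j [p] + iC2 i j [p] = 0 :=
      funext fun k => CharTwo.add_self_eq_zero (iC2 i j [p] k)
    rw [← map_mul, ← ofAdd_add, hp, ofAdd_zero, map_one]

theorem genImage_of_disjoint {p : PIdx n} (hi : i ∉ pairSet p) (hj : j ∉ pairSet p) :
    genImage i j p = 1 := by
  have hp : pairSet p ≠ {i, j} := fun h => hi (by simp [h])
  rw [genImage, if_neg hp, iC2_singleton_of_disjoint i j p hi hj, ofAdd_zero, map_one]

theorem genImage_commute {p q : PIdx n} (hpq : Disjoint (pairSet p) (pairSet q)) :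
    Commute (genImage i j p) (genImage i j q) := by
  by_cases hp : pairSet p = {i, j}
  · rw [hp, Finset.disjoint_insert_left, Finset.disjoint_singleton_left] at hpq
    rw [genImage_of_disjoint i j hpq.1 hpq.2]
    exact Commute.one_right _
  by_cases hq : pairSet q = {i, j}
  · rw [hq, Finset.disjoint_insert_right, Finset.disjoint_singleton_right] at hpq
    rw [genImage_of_disjoint i j hpq.1 hpq.2]
    exact Commute.one_left _
  simp only [genImage, if_neg hp, if_neg hq]
  exact (Commute.all _ _).map inr

theorem genImage_eq_of_pair {x y z : ℕ} (hxz : x ≠ z) (hyz : y ≠ z)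
    (hxy : ({x, y} : Finset ℕ) = {i, j}) {q r : PIdx n}
    (hq : pairSet q = {x, z}) (hr : pairSet r = {y, z}) :
    genImage i j q = genImage i j r := by
  have hq' : pairSet q ≠ {i, j} := by
    rw [hq, ← hxy, ne_eq, finset_pair_eq_pair_iff]; omega
  have hr' : pairSet r ≠ {i, j} := by
    rw [hr, ← hxy, ne_eq, finset_pair_eq_pair_iff]; omega
  rw [genImage, genImage, if_neg hq', if_neg hr', iC2_singleton_eq_of_pair i j hxy q r hq hr]

theorem genImage_triangle {a b c : ℕ} (hab : a ≠ b) (hac : a ≠ c) (hbc : b ≠ c)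
    {P Q R : PIdx n} (hP : pairSet P = {a, b}) (hQ : pairSet Q = {a, c})
    (hR : pairSet R = {b, c}) :
    genImage i j P * genImage i j Q * genImage i j R =
      genImage i j R * genImage i j Q * genImage i j P := by
  by_cases hP' : pairSet P = {i, j}
  · rw [genImage_eq_of_pair i j hac hbc (hP.symm.trans hP') hQ hR, mul_assoc,
      genImage_mul_self, mul_one, one_mul]
  by_cases hQ' : pairSet Q = {i, j}
  · rw [genImage_eq_of_pair i j hab hbc.symm (hQ.symm.trans hQ') hP
      (hR.trans (Finset.pair_comm b c))]
  by_cases hR' : pairSet R = {i, j}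
  · rw [genImage_eq_of_pair i j hab.symm hac.symm (hR.symm.trans hR')
      (hP.trans (Finset.pair_comm a b)) (hQ.trans (Finset.pair_comm a c)),
      mul_assoc (genImage i j R), genImage_mul_self, one_mul, mul_one]
  simp only [genImage, if_neg hP', if_neg hQ', if_neg hR', ← map_mul]
  congr 1
  ac_rfl

theorem lift_genImage_eq_one : ∀ r ∈ rels2 n, FreeGroup.lift (genImage i j) r = 1 := by
  rintro r ((⟨p, rfl⟩ | ⟨a, b, c, d, ha, ha', hb, hb', hc, hc', hd, hd', hab, hac, had, hbc,
      hbd, hcd, rfl⟩) | ⟨a, b, c, ha, ha', hb, hb', hc, hc', hab, hac, hbc, rfl⟩)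
  · simpa using genImage_mul_self i j p
  · obtain ⟨P, hPe, hP⟩ := exists_fgen2_eq_of ha ha' hb hb' hab
    obtain ⟨Q, hQe, hQ⟩ := exists_fgen2_eq_of hc hc' hd hd' hcd
    have hPQ : Disjoint (pairSet P) (pairSet Q) := by
      simp only [hP, hQ, Finset.disjoint_insert_left, Finset.disjoint_singleton_left,
        Finset.mem_insert, Finset.mem_singleton]
      omega
    simp only [hPe, hQe, map_mul, map_inv, FreeGroup.lift_apply_of]
    rw [(genImage_commute i j hPQ).eq, mul_inv_cancel_right, mul_inv_cancel]
  · obtain ⟨P, hPe, hP⟩ := exists_fgen2_eq_of ha ha' hb hb' hab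
    obtain ⟨Q, hQe, hQ⟩ := exists_fgen2_eq_of ha ha' hc hc' hac
    obtain ⟨R, hRe, hR⟩ := exists_fgen2_eq_of hb hb' hc hc' hbc
    simp only [hPe, hQe, hRe, map_mul, map_inv, FreeGroup.lift_apply_of]
    rw [genImage_triangle i j hab hac hbc hP hQ hR, mul_inv_cancel]

def w2Hom : G2 n →* F2Ext n i j :=
  PresentedGroup.toGroup (lift_genImage_eq_one i j)

theorem w2Hom_toG2 (β : List (PIdx n)) :
    w2Hom i j (toG2 β) = inl (w2 i j β) * inr (Multiplicative.ofAdd (iC2 i j β)) := by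
  induction β using List.reverseRecOn with
  | nil =>
    have h0 : iC2 i j ([] : List (PIdx n)) = 0 := funext fun k => by simp [iC2, cnt2]
    rw [h0, ofAdd_zero, map_one, mul_one]
    rfl
  | append_singleton β a ih =>
    rw [toG2_append_singleton, map_mul, ih, w2Hom, PresentedGroup.toGroup.of,
      w2_append_singleton, iC2_append, genImage]
    split_ifs with h
    · rw [iC2_singleton_of_eq i j a h]
      ext <;> simp
    · ext <;> simp

end Invariant

theorem statement_7_general (n i j : ℕ) (β β' : List (PIdx n)) (h : toG2 β = toG2 β') :
    w2 i j β = w2 i j β' := by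
  simpa [w2Hom_toG2] using congrArg (fun g => (w2Hom i j g).left) h

theorem statement_7 (n i j : ℕ) (hn : 3 ≤ n)
    (hi : 1 ≤ i) (hij : i < j) (hj : j ≤ n)
    (β β' : List (PIdx n)) (hg : good2 β) (hg' : good2 β')
    (h : toG2 β = toG2 β') :
    w2 i j β = w2 i j β' :=
  statement_7_general n i j β β' h

end GnkBrunnian
end

section
/- Fix n ≥ 3. If β and β′ are words in the generators of G_{n+1}^3 representing the same element of G_{n+1}^3, then f(β) = f(β′) in G_{n,p}^3. In other words, f : G_{n+1}^3 → G_{n,p}^3 is well defined. -/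
namespace GnkBrunnian

/-!
Alongside the word `f(β)`, record the vector `v` of parities of the numbers of letters
`a_{st(n+1)}` read so far. These vectors form an elementary abelian `2`-group `V` acting on
`G_{n,p}^3` by `a_{ijk}^ε ↦ a_{ijk}^{ε + v(j,k) + v(i,k)}` (`i < j < k`). This respects
relation (3) because the shifts of the three letters containing its largest index `t` add up to
`Σ_s 2 v(s, t) = 0`. Sending `a_{ijk} ↦ a_{ijk}^0` for `k ≤ n` and
`a_{ij(n+1)} ↦` the indicator of `(i, j)` defines a homomorphism `G_{n+1}^3 → G_{n,p}^3 ⋊ V`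
whose value on a word `β` is `(f(β), v(β))`, so `f(β)` depends only on the element `β` represents.

Relations (1) and (2) go through because a letter `a_{ij(n+1)}` only moves the letters containing
both `i` and `j`. A relation (3) involving `n + 1` becomes, after a cyclic rotation of its four
letters, `(a_{xyz}^0 · u)² = 1` with `u ∈ V` the sum of the parities of the three faces
`a_{xy(n+1)}, a_{xz(n+1)}, a_{yz(n+1)}`; it holds because `u` shifts the exponent of `a_{xyz}`
by `1 + 1 = 0`.
-/
section Indices

lemma sort3_comm12 (a b c : ℕ) : sort3 a b c = sort3 b a c := by
  simp only [sort3, Prod.mk.injEq]; omega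

lemma sort3_comm23 (a b c : ℕ) : sort3 a b c = sort3 a c b := by
  simp only [sort3, Prod.mk.injEq]; omega

lemma sort3_of_lt {a b c : ℕ} (hab : a < b) (hbc : b < c) : sort3 a b c = (a, b, c) := by
  simp only [sort3, Prod.mk.injEq]; omega

lemma T3ok_sort3 {N a b c : ℕ} (ha : 1 ≤ a) (hb : 1 ≤ b) (hc : 1 ≤ c)
    (ha' : a ≤ N) (hb' : b ≤ N) (hc' : c ≤ N) (hab : a ≠ b) (hac : a ≠ c) (hbc : b ≠ c) :
    T3ok N (sort3 a b c) := by
  simp only [T3ok, sort3]; omega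

lemma tripSet_sort3 {N a b c : ℕ} (h : T3ok N (sort3 a b c)) :
    tripSet (⟨sort3 a b c, h⟩ : TIdx N) = {a, b, c} := by
  ext t
  simp only [tripSet, sort3, Finset.mem_insert, Finset.mem_singleton]
  omega

lemma mem_of_sort3 (a b c : ℕ) :
    ((sort3 a b c).1 = a ∨ (sort3 a b c).1 = b ∨ (sort3 a b c).1 = c) ∧
    ((sort3 a b c).2.1 = a ∨ (sort3 a b c).2.1 = b ∨ (sort3 a b c).2.1 = c) ∧
    ((sort3 a b c).2.2 = a ∨ (sort3 a b c).2.2 = b ∨ (sort3 a b c).2.2 = c) := by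
  simp only [sort3]; omega

lemma fgen3_comm12 (N a b c : ℕ) : fgen3 N a b c = fgen3 N b a c := by
  rw [fgen3, fgen3, sort3_comm12]

lemma fgen3_comm23 (N a b c : ℕ) : fgen3 N a b c = fgen3 N a c b := by
  rw [fgen3, fgen3, sort3_comm23]

lemma insert_pair_eq_insert_pair_iff {x y P Q m : ℕ} (hx : x ≠ m) (hy : y ≠ m) (hP : P ≠ m)
    (hQ : Q ≠ m) : ({x, y, m} : Finset ℕ) = {P, Q, m} ↔ (x = P ∧ y = Q ∨ x = Q ∧ y = P) := by
  constructor
  · intro h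
    have hmem := Finset.ext_iff.1 h
    simp only [Finset.mem_insert, Finset.mem_singleton] at hmem
    have := hmem x; have := hmem y; have := hmem P; have := hmem Q
    omega
  · rintro (⟨rfl, rfl⟩ | ⟨rfl, rfl⟩)
    · rfl
    · exact Finset.insert_comm _ _ _

end Indices

section Involutions

variable {H : Type*} [Group H]

lemma inv_eq_self_of_mul_self {a : H} (ha : a * a = 1) : a⁻¹ = a :=
  inv_eq_of_mul_eq_one_left ha

lemma sq_eq_one_of_sq_mul_comm {a x : H} (h : (x * a) ^ 2 = 1) : (a * x) ^ 2 = 1 := by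
  rw [sq] at h ⊢
  calc a * x * (a * x) = a * (x * a * (x * a)) * a⁻¹ := by group
    _ = 1 := by rw [h, mul_one, mul_inv_cancel]

lemma mul_commutator_eq_one_of_commute {a b : H} (h : Commute a b) : a * b * a⁻¹ * b⁻¹ = 1 := by
  rw [h.eq, mul_inv_cancel_right, mul_inv_cancel]

lemma commute_of_mul_sq_eq_one {a b : H} (ha : a * a = 1) (hb : b * b = 1)
    (h : (a * b) ^ 2 = 1) : Commute a b := by
  have hab : a * b = (a * b)⁻¹ := eq_inv_of_mul_eq_one_left (by rwa [← sq])
  rw [Commute, SemiconjBy, hab, mul_inv_rev, inv_eq_self_of_mul_self ha,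
    inv_eq_self_of_mul_self hb]

lemma mul_inv_reverse_eq_sq {a b c d : H} (ha : a * a = 1) (hb : b * b = 1) (hc : c * c = 1)
    (hd : d * d = 1) : a * b * c * d * (d * c * b * a)⁻¹ = (a * b * c * d) ^ 2 := by
  simp only [mul_inv_rev, inv_eq_self_of_mul_self ha, inv_eq_self_of_mul_self hb,
    inv_eq_self_of_mul_self hc, inv_eq_self_of_mul_self hd, sq, mul_assoc]

lemma tetra_of_tetra_rotate (L : ℕ → ℕ → ℕ → H)
    (h12 : ∀ x y z, L x y z = L y x z) (h23 : ∀ x y z, L x y z = L x z y) {i j k l : ℕ}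
    (h : (L l i j * L l i k * L l j k * L i j k) ^ 2 = 1) :
    (L i j k * L i j l * L i k l * L j k l) ^ 2 = 1 := by
  have hrot : ∀ x y z, L z x y = L x y z := fun x y z => by rw [h12, h23]
  rw [hrot, hrot i k, hrot j k] at h
  simpa only [mul_assoc] using
    sq_eq_one_of_sq_mul_comm (a := L i j k) (by simpa only [mul_assoc] using h)

end Involutions

section GP3

variable {n : ℕ}

lemma GP3.of_mul_self (a : TPIdx n) : (PresentedGroup.of a : GP3 n) * PresentedGroup.of a = 1 :=
  PresentedGroup.one_of_mem (rels := relsP3 n) (Or.inl (Or.inl ⟨a, rfl⟩))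

lemma GP3.commute_of {a b : TPIdx n} (h : (tripSet a.1 ∩ tripSet b.1).card < 2) :
    Commute (PresentedGroup.of a : GP3 n) (PresentedGroup.of b) := by
  refine commute_of_mul_sq_eq_one (GP3.of_mul_self a) (GP3.of_mul_self b) ?_
  have := PresentedGroup.one_of_mem (rels := relsP3 n) (Or.inl (Or.inr ⟨a, b, h, rfl⟩))
  rwa [map_pow, map_mul] at this

lemma GP3.tetra_zero {i j k l : ℕ} (hi : 1 ≤ i ∧ i ≤ n) (hj : 1 ≤ j ∧ j ≤ n) (hk : 1 ≤ k ∧ k ≤ n)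
    (hl : 1 ≤ l ∧ l ≤ n) (hij : i ≠ j) (hik : i ≠ k) (hil : i ≠ l) (hjk : j ≠ k) (hjl : j ≠ l)
    (hkl : k ≠ l) :
    (PresentedGroup.mk (relsP3 n) (fgenP3 n i j k 0) * PresentedGroup.mk _ (fgenP3 n i j l 0) *
      PresentedGroup.mk _ (fgenP3 n i k l 0) * PresentedGroup.mk _ (fgenP3 n j k l 0)) ^ 2 = 1 := by
  simp only [← map_mul, ← map_pow]
  refine PresentedGroup.one_of_mem (Or.inr ⟨i, j, k, l, 0, 0, 0, 0, hi.1, hi.2, hj.1, hj.2, hk.1,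
    hk.2, hl.1, hl.2, hij, hik, hil, hjk, hjl, hkl, ?_, rfl⟩)
  simp

end GP3

section Twist

/-- `v (s, t)` is the parity of the number of letters `a_{s t (n+1)}` read so far. -/
abbrev ParityVec : Type := ℕ × ℕ → ZMod 2

lemma ParityVec.add_self (v : ParityVec) : v + v = 0 :=
  funext fun _ => CharTwo.add_self_eq_zero _

/-- The parity `v(j,k) + v(i,k)` by which `f` shifts the exponent of `a_{ijk}`, `i < j < k`. -/
def parityShift (v : ParityVec) (t : ℕ × ℕ × ℕ) : ZMod 2 := v (t.2.1, t.2.2) + v (t.1, t.2.2)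

lemma parityShift_add (v w : ParityVec) (t : ℕ × ℕ × ℕ) :
    parityShift (v + w) t = parityShift v t + parityShift w t := by
  simp only [parityShift, Pi.add_apply]; ring

lemma parityShift_zero (t : ℕ × ℕ × ℕ) : parityShift 0 t = 0 := by
  simp [parityShift]

/-- In characteristic two, `v(mid, m) + v(min, m) = v(a, m) + v(b, m) + v(c, m) + v(m, m)` for
`m = max a b c`; this form is symmetric in `a, b, c`. -/
lemma parityShift_sort3 (v : ParityVec) (a b c : ℕ) :
    parityShift v (sort3 a b c) =
      v (a, max a (max b c)) + v (b, max a (max b c)) + v (c, max a (max b c)) +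
        v (max a (max b c), max a (max b c)) := by
  have hm : max a (max b c) = (sort3 a b c).2.2 := rfl
  rw [hm, parityShift]
  rcases le_total a b with h1 | h1 <;> rcases le_total b c with h2 | h2 <;>
    rcases le_total a c with h3 | h3 <;>
    first
    | rw [show sort3 a b c = (a, b, c) by simp only [sort3, Prod.mk.injEq]; omega]
    | rw [show sort3 a b c = (a, c, b) by simp only [sort3, Prod.mk.injEq]; omega]
    | rw [show sort3 a b c = (b, a, c) by simp only [sort3, Prod.mk.injEq]; omega]
    | rw [show sort3 a b c = (b, c, a) by simp only [sort3, Prod.mk.injEq]; omega]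
    | rw [show sort3 a b c = (c, a, b) by simp only [sort3, Prod.mk.injEq]; omega]
    | rw [show sort3 a b c = (c, b, a) by simp only [sort3, Prod.mk.injEq]; omega]
  all_goals ring_nf; reduce_mod_char

variable {n : ℕ}

def twistLetter (v : ParityVec) (a : TPIdx n) : TPIdx n := (a.1, a.2 + parityShift v a.1.1)

lemma twistLetter_add (v w : ParityVec) (a : TPIdx n) :
    twistLetter (v + w) a = twistLetter v (twistLetter w a) := by
  simp only [twistLetter, parityShift_add, Prod.mk.injEq, true_and]; ring

lemma twistLetter_zero (a : TPIdx n) : twistLetter 0 a = a := by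
  simp [twistLetter, parityShift_zero]

lemma map_twistLetter_fgenP3 (v : ParityVec) (a b c : ℕ) (e : ZMod 2) :
    FreeGroup.map (twistLetter v) (fgenP3 n a b c e) =
      fgenP3 n a b c (e + parityShift v (sort3 a b c)) := by
  unfold fgenP3; split_ifs <;> simp [twistLetter]

lemma map_twistLetter_mem_relsP3 (v : ParityVec) {r : FreeGroup (TPIdx n)} (hr : r ∈ relsP3 n) :
    FreeGroup.map (twistLetter v) r ∈ relsP3 n := by
  rcases hr with (⟨a, rfl⟩ | ⟨a, b, hab, rfl⟩) | ⟨i, j, k, l, ei, ej, ek, el, hi, hi', hj, hj',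
    hk, hk', hl, hl', hij, hik, hil, hjk, hjl, hkl, hcond, rfl⟩
  · exact Or.inl (Or.inl ⟨twistLetter v a, by simp⟩)
  · exact Or.inl (Or.inr ⟨twistLetter v a, twistLetter v b, hab, by simp⟩)
  · refine Or.inr ⟨i, j, k, l, ei + parityShift v (sort3 j k l), ej + parityShift v (sort3 i k l),
      ek + parityShift v (sort3 i j l), el + parityShift v (sort3 i j k), hi, hi', hj, hj', hk, hk',
      hl, hl', hij, hik, hil, hjk, hjl, hkl, ?_, by simp only [map_pow, map_mul,
      map_twistLetter_fgenP3]⟩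
    simp only [parityShift_sort3]
    split_ifs at hcond ⊢ <;> simp (disch := omega) only [max_eq_left, max_eq_right] <;>
      linear_combination (norm := ring_nf) hcond <;> reduce_mod_char

end Twist

section SemidirectProduct

open SemidirectProduct

variable {N G : Type*} [Group N] [CommGroup G] {φ : G →* MulAut N}

lemma inl_mul_inr_mul_self {g : N} {u : G} (hg : g * g = 1) (hu : u * u = 1) (hfix : φ u g = g) :
    (inl g * inr u : N ⋊[φ] G) * (inl g * inr u) = 1 := by
  ext <;> simp [hfix, hg, hu]

lemma commute_inl_mul_inr {g h : N} {u w : G} (hgh : Commute g h) (hu : φ u h = h)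
    (hw : φ w g = g) : Commute (inl g * inr u : N ⋊[φ] G) (inl h * inr w) := by
  ext <;> simp [hu, hw, hgh.eq, mul_comm]

lemma inl_mul_inr_mul_inl_mul_inr (g h : N) (u w : G) :
    (inl g * inr u : N ⋊[φ] G) * (inl h * inr w) = inl (g * φ u h) * inr (u * w) := by
  ext <;> simp

end SemidirectProduct

section Action

variable {n : ℕ}

def twist (v : ParityVec) : GP3 n →* GP3 n :=
  PresentedGroup.toGroup (f := fun a => PresentedGroup.of (twistLetter v a)) fun r hr => by
    have hlift : FreeGroup.lift (fun a => (PresentedGroup.of (twistLetter v a) : GP3 n)) =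
        (PresentedGroup.mk (relsP3 n)).comp (FreeGroup.map (twistLetter v)) :=
      FreeGroup.ext_hom _ _ fun _ => by simp [PresentedGroup.of]
    rw [hlift, MonoidHom.comp_apply]
    exact PresentedGroup.one_of_mem (map_twistLetter_mem_relsP3 v hr)

lemma twist_of (v : ParityVec) (a : TPIdx n) :
    twist v (PresentedGroup.of a) = PresentedGroup.of (twistLetter v a) :=
  PresentedGroup.toGroup.of _

lemma twist_add_apply (v w : ParityVec) (x : GP3 n) : twist (v + w) x = twist v (twist w x) := by
  rw [← MonoidHom.comp_apply]
  congr 1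
  exact PresentedGroup.ext fun a => by simp [twist_of, twistLetter_add]

lemma twist_zero_apply (x : GP3 n) : twist 0 x = x := by
  rw [← MonoidHom.id_apply (M := GP3 n) x]
  congr 1
  exact PresentedGroup.ext fun a => by simp [twist_of, twistLetter_zero]

lemma twist_twist (v : ParityVec) (x : GP3 n) : twist v (twist v x) = x := by
  rw [← twist_add_apply, ParityVec.add_self, twist_zero_apply]

def twistEquiv (v : ParityVec) : GP3 n ≃* GP3 n :=
  { twist v with
    invFun := twist v
    left_inv := twist_twist v
    right_inv := twist_twist v }

def twistAction : Multiplicative ParityVec →* MulAut (GP3 n) where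
  toFun v := twistEquiv v.toAdd
  map_one' := MulEquiv.ext twist_zero_apply
  map_mul' v w := MulEquiv.ext (twist_add_apply v.toAdd w.toAdd)

lemma twistAction_apply (v : ParityVec) (x : GP3 n) :
    twistAction (Multiplicative.ofAdd v) x = twist v x := rfl

abbrev ParityExt (n : ℕ) := GP3 n ⋊[twistAction] Multiplicative ParityVec

end Action

section Letters

open SemidirectProduct

variable {n : ℕ}

def topParity (a : TIdx (n + 1)) : ParityVec :=
  fun p => if tripSet a = {p.1, p.2, n + 1} then 1 else 0

def lowPart (a : TIdx (n + 1)) : GP3 n :=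
  if h : T3ok n a.1 then PresentedGroup.of (⟨a.1, h⟩, 0) else 1

def letterImage (a : TIdx (n + 1)) : ParityExt n :=
  inl (lowPart a) * inr (Multiplicative.ofAdd (topParity a))

lemma topParity_of_T3ok {a : TIdx (n + 1)} (h : T3ok n a.1) : topParity a = 0 := by
  funext p
  refine if_neg fun he => ?_
  have hmem : n + 1 ∈ tripSet a := by rw [he]; simp
  simp only [tripSet, Finset.mem_insert, Finset.mem_singleton] at hmem
  omega

lemma topParity_apply_of_card_inter_lt {a b : TIdx (n + 1)} (h : (tripSet a ∩ tripSet b).card < 2)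
    {P Q : ℕ} (hP : P ∈ tripSet b) (hQ : Q ∈ tripSet b) (hPQ : P ≠ Q) : topParity a (P, Q) = 0 := by
  refine if_neg fun he => ?_
  have hsub : ({P, Q} : Finset ℕ) ⊆ tripSet a ∩ tripSet b := by
    simp [Finset.insert_subset_iff, he, hP, hQ]
  have := Finset.card_le_card hsub
  rw [Finset.card_pair hPQ] at this
  omega

lemma topParity_sort3_apply {x y : ℕ} (hx : x ≤ n) (hy : y ≤ n)
    (h : T3ok (n + 1) (sort3 x y (n + 1))) {P Q : ℕ} (hP : P ≤ n) (hQ : Q ≤ n) :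
    topParity ⟨sort3 x y (n + 1), h⟩ (P, Q) = if x = P ∧ y = Q ∨ x = Q ∧ y = P then 1 else 0 := by
  simp only [topParity, tripSet_sort3]
  exact if_congr (insert_pair_eq_insert_pair_iff (by omega) (by omega) (by omega) (by omega))
    rfl rfl

lemma lowPart_mul_self (a : TIdx (n + 1)) : lowPart a * lowPart a = 1 := by
  unfold lowPart
  split_ifs
  · exact GP3.of_mul_self _
  · exact mul_one 1

lemma lowPart_of_not_T3ok {a : TIdx (n + 1)} (h : ¬ T3ok n a.1) : lowPart a = 1 := dif_neg h

lemma lowPart_sort3 {x y z : ℕ} (h : T3ok (n + 1) (sort3 x y z)) :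
    lowPart ⟨sort3 x y z, h⟩ = PresentedGroup.mk _ (fgenP3 n x y z 0) := by
  unfold lowPart fgenP3
  split_ifs
  · rfl
  · exact (map_one _).symm

lemma commute_lowPart {a b : TIdx (n + 1)} (h : (tripSet a ∩ tripSet b).card < 2) :
    Commute (lowPart a) (lowPart b) := by
  unfold lowPart
  split_ifs
  · exact GP3.commute_of h
  all_goals simp

lemma twist_lowPart {v : ParityVec} {a : TIdx (n + 1)} (h : parityShift v a.1 = 0) :
    twist v (lowPart a) = lowPart a := by
  unfold lowPart
  split_ifs
  · simp [twist_of, twistLetter, h]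
  · exact map_one _

lemma twist_topParity_lowPart {a b : TIdx (n + 1)} (h : (tripSet a ∩ tripSet b).card < 2) :
    twist (topParity a) (lowPart b) = lowPart b := by
  have hb := b.2
  refine twist_lowPart ?_
  rw [parityShift, topParity_apply_of_card_inter_lt h (by simp [tripSet]) (by simp [tripSet])
    (by omega), topParity_apply_of_card_inter_lt h (by simp [tripSet]) (by simp [tripSet])
    (by omega), add_zero]

lemma ofAdd_mul_self (v : ParityVec) : Multiplicative.ofAdd v * Multiplicative.ofAdd v = 1 := by
  rw [← ofAdd_add, ParityVec.add_self, ofAdd_zero]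

lemma letterImage_mul_self (a : TIdx (n + 1)) : letterImage a * letterImage a = 1 := by
  refine inl_mul_inr_mul_self (lowPart_mul_self a) (ofAdd_mul_self _) ?_
  rw [twistAction_apply]
  by_cases h : T3ok n a.1
  · rw [topParity_of_T3ok h, twist_zero_apply]
  · rw [lowPart_of_not_T3ok h, map_one]

lemma commute_letterImage {a b : TIdx (n + 1)} (h : (tripSet a ∩ tripSet b).card < 2) :
    Commute (letterImage a) (letterImage b) :=
  commute_inl_mul_inr (commute_lowPart h) (twist_topParity_lowPart h)
    (twist_topParity_lowPart (by rwa [Finset.inter_comm]))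

lemma letterImage_of_T3ok {a : TIdx (n + 1)} (h : T3ok n a.1) :
    letterImage a = inl (lowPart a) := by
  rw [letterImage, topParity_of_T3ok h, ofAdd_zero, map_one, mul_one]

lemma letterImage_of_not_T3ok {a : TIdx (n + 1)} (h : ¬ T3ok n a.1) :
    letterImage a = inr (Multiplicative.ofAdd (topParity a)) := by
  rw [letterImage, lowPart_of_not_T3ok h, map_one, one_mul]

end Letters

section Faces

open SemidirectProduct

def faceImage (n x y z : ℕ) : ParityExt n := FreeGroup.lift letterImage (fgen3 (n + 1) x y z)

variable {n : ℕ}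

lemma faceImage_comm12 (x y z : ℕ) : faceImage n x y z = faceImage n y x z := by
  rw [faceImage, fgen3_comm12]; rfl

lemma faceImage_comm23 (x y z : ℕ) : faceImage n x y z = faceImage n x z y := by
  rw [faceImage, fgen3_comm23]; rfl

lemma faceImage_of_T3ok {x y z : ℕ} (h : T3ok (n + 1) (sort3 x y z)) :
    faceImage n x y z = letterImage ⟨sort3 x y z, h⟩ := by
  rw [faceImage, fgen3, dif_pos h, FreeGroup.lift_apply_of]

lemma faceImage_mul_self (x y z : ℕ) : faceImage n x y z * faceImage n x y z = 1 := by
  by_cases h : T3ok (n + 1) (sort3 x y z)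
  · rw [faceImage_of_T3ok h, letterImage_mul_self]
  · rw [faceImage, fgen3, dif_neg h, map_one, mul_one]

lemma faceImage_of_le {x y z : ℕ} (hx : x ≤ n) (hy : y ≤ n) (hz : z ≤ n) :
    faceImage n x y z = inl (PresentedGroup.mk _ (fgenP3 n x y z 0)) := by
  by_cases h : T3ok (n + 1) (sort3 x y z)
  · have hlow : T3ok n (sort3 x y z) := by simp only [T3ok, sort3] at h ⊢; omega
    rw [faceImage_of_T3ok h, letterImage_of_T3ok hlow, lowPart_sort3]
  · have hlow : ¬ T3ok n (sort3 x y z) := by simp only [T3ok, sort3] at h ⊢; omega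
    rw [faceImage, fgen3, fgenP3, dif_neg h, dif_neg hlow, map_one, map_one, map_one]

lemma faceImage_top {x y : ℕ} (h : T3ok (n + 1) (sort3 x y (n + 1))) :
    faceImage n x y (n + 1) = inr (Multiplicative.ofAdd (topParity ⟨sort3 x y (n + 1), h⟩)) := by
  rw [faceImage_of_T3ok h, letterImage_of_not_T3ok]
  simp only [T3ok, sort3]
  omega

lemma face_indicator_sum {x y z P Q : ℕ} (hxy : x ≠ y) (hxz : x ≠ z) (hyz : y ≠ z)
    (hP : P = x ∨ P = y ∨ P = z) (hQ : Q = x ∨ Q = y ∨ Q = z) (hPQ : P ≠ Q) :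
    (if x = P ∧ y = Q ∨ x = Q ∧ y = P then (1 : ZMod 2) else 0) +
      (if x = P ∧ z = Q ∨ x = Q ∧ z = P then 1 else 0) +
      (if y = P ∧ z = Q ∨ y = Q ∧ z = P then 1 else 0) = 1 := by
  rcases hP with rfl | rfl | rfl <;> rcases hQ with rfl | rfl | rfl <;>
    simp [hxy, hxz, hyz, hxy.symm, hxz.symm, hyz.symm] at hPQ ⊢

lemma parityShift_faces {x y z : ℕ} {t : ℕ × ℕ × ℕ} (hx : x ≤ n) (hy : y ≤ n) (hz : z ≤ n)
    (hxy : x ≠ y) (hxz : x ≠ z) (hyz : y ≠ z) (hxy' : T3ok (n + 1) (sort3 x y (n + 1)))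
    (hxz' : T3ok (n + 1) (sort3 x z (n + 1))) (hyz' : T3ok (n + 1) (sort3 y z (n + 1)))
    (ht : T3ok n t) (h1 : t.1 = x ∨ t.1 = y ∨ t.1 = z) (h2 : t.2.1 = x ∨ t.2.1 = y ∨ t.2.1 = z)
    (h3 : t.2.2 = x ∨ t.2.2 = y ∨ t.2.2 = z) :
    parityShift (topParity ⟨sort3 x y (n + 1), hxy'⟩ + topParity ⟨sort3 x z (n + 1), hxz'⟩ +
      topParity ⟨sort3 y z (n + 1), hyz'⟩) t = 0 := by
  obtain ⟨t1, t2, t3⟩ := t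
  simp only [T3ok] at ht h1 h2 h3
  simp only [parityShift, Pi.add_apply]
  rw [topParity_sort3_apply hx hy _ (by omega) (by omega),
    topParity_sort3_apply hx hz _ (by omega) (by omega),
    topParity_sort3_apply hy hz _ (by omega) (by omega),
    topParity_sort3_apply hx hy _ (by omega) (by omega),
    topParity_sort3_apply hx hz _ (by omega) (by omega),
    topParity_sort3_apply hy hz _ (by omega) (by omega),
    face_indicator_sum hxy hxz hyz h2 h3 (by omega),
    face_indicator_sum hxy hxz hyz h1 h3 (by omega)]
  decide

lemma faceImage_tetra_top {x y z : ℕ} (hx : 1 ≤ x ∧ x ≤ n) (hy : 1 ≤ y ∧ y ≤ n)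
    (hz : 1 ≤ z ∧ z ≤ n) (hxy : x ≠ y) (hxz : x ≠ z) (hyz : y ≠ z) :
    (faceImage n x y z * faceImage n x y (n + 1) * faceImage n x z (n + 1) *
      faceImage n y z (n + 1)) ^ 2 = 1 := by
  have hxyz : T3ok (n + 1) (sort3 x y z) :=
    T3ok_sort3 hx.1 hy.1 hz.1 (by omega) (by omega) (by omega) hxy hxz hyz
  have hxy' : T3ok (n + 1) (sort3 x y (n + 1)) :=
    T3ok_sort3 hx.1 hy.1 (by omega) (by omega) (by omega) le_rfl hxy (by omega) (by omega)
  have hxz' : T3ok (n + 1) (sort3 x z (n + 1)) :=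
    T3ok_sort3 hx.1 hz.1 (by omega) (by omega) (by omega) le_rfl hxz (by omega) (by omega)
  have hyz' : T3ok (n + 1) (sort3 y z (n + 1)) :=
    T3ok_sort3 hy.1 hz.1 (by omega) (by omega) (by omega) le_rfl hyz (by omega) (by omega)
  have hlow : T3ok n (sort3 x y z) := by simp only [T3ok, sort3] at hxyz ⊢; omega
  rw [faceImage_of_T3ok hxyz, letterImage_of_T3ok hlow, faceImage_top hxy', faceImage_top hxz',
    faceImage_top hyz', mul_assoc, mul_assoc, ← map_mul, ← map_mul, sq]
  refine inl_mul_inr_mul_self (lowPart_mul_self _) (ofAdd_mul_self _) ?_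
  rw [← ofAdd_add, ← ofAdd_add, ← add_assoc, twistAction_apply]
  obtain ⟨h1, h2, h3⟩ := mem_of_sort3 x y z
  exact twist_lowPart (parityShift_faces hx.2 hy.2 hz.2 hxy hxz hyz hxy' hxz' hyz' hlow h1 h2 h3)

lemma faceImage_tetra {i j k l : ℕ} (hi : 1 ≤ i ∧ i ≤ n + 1) (hj : 1 ≤ j ∧ j ≤ n + 1)
    (hk : 1 ≤ k ∧ k ≤ n + 1) (hl : 1 ≤ l ∧ l ≤ n + 1) (hij : i ≠ j) (hik : i ≠ k) (hil : i ≠ l)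
    (hjk : j ≠ k) (hjl : j ≠ l) (hkl : k ≠ l) :
    (faceImage n i j k * faceImage n i j l * faceImage n i k l * faceImage n j k l) ^ 2 = 1 := by
  have rotate {a b c d : ℕ} :=
    tetra_of_tetra_rotate (faceImage n) faceImage_comm12 faceImage_comm23
      (i := a) (j := b) (k := c) (l := d)
  rcases (show i = n + 1 ∨ j = n + 1 ∨ k = n + 1 ∨ l = n + 1 ∨ (i ≤ n ∧ j ≤ n ∧ k ≤ n ∧ l ≤ n)
    by omega) with rfl | rfl | rfl | rfl | hlow
  · exact rotate (rotate (rotate (faceImage_tetra_top ⟨hj.1, by omega⟩ ⟨hk.1, by omega⟩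
      ⟨hl.1, by omega⟩ hjk hjl hkl)))
  · exact rotate (rotate (faceImage_tetra_top ⟨hk.1, by omega⟩ ⟨hl.1, by omega⟩ ⟨hi.1, by omega⟩
      hkl hik.symm hil.symm))
  · exact rotate (faceImage_tetra_top ⟨hl.1, by omega⟩ ⟨hi.1, by omega⟩ ⟨hj.1, by omega⟩
      hil.symm hjl.symm hij)
  · exact faceImage_tetra_top ⟨hi.1, by omega⟩ ⟨hj.1, by omega⟩ ⟨hk.1, by omega⟩ hij hik hjk
  · obtain ⟨hi', hj', hk', hl'⟩ := hlow
    rw [faceImage_of_le hi' hj' hk', faceImage_of_le hi' hj' hl', faceImage_of_le hi' hk' hl',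
      faceImage_of_le hj' hk' hl', ← map_mul, ← map_mul, ← map_mul, ← map_pow,
      GP3.tetra_zero ⟨hi.1, hi'⟩ ⟨hj.1, hj'⟩ ⟨hk.1, hk'⟩ ⟨hl.1, hl'⟩ hij hik hil hjk hjl hkl,
      map_one]

end Faces

section Hom

open SemidirectProduct

variable {n : ℕ}

lemma lift_letterImage_eq_one {r : FreeGroup (TIdx (n + 1))} (hr : r ∈ rels3 (n + 1)) :
    FreeGroup.lift letterImage r = 1 := by
  rcases hr with (⟨a, rfl⟩ | ⟨a, b, hab, rfl⟩) | ⟨i, j, k, l, hi, hi', hj, hj', hk, hk', hl, hl',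
    hij, hik, hil, hjk, hjl, hkl, rfl⟩
  · simpa using letterImage_mul_self a
  · simpa using mul_commutator_eq_one_of_commute (commute_letterImage hab)
  · simp only [map_mul, map_inv]
    change faceImage n i j k * faceImage n i j l * faceImage n i k l * faceImage n j k l *
      (faceImage n j k l * faceImage n i k l * faceImage n i j l * faceImage n i j k)⁻¹ = 1
    rw [mul_inv_reverse_eq_sq (faceImage_mul_self _ _ _) (faceImage_mul_self _ _ _)
      (faceImage_mul_self _ _ _) (faceImage_mul_self _ _ _)]
    exact faceImage_tetra ⟨hi, hi'⟩ ⟨hj, hj'⟩ ⟨hk, hk'⟩ ⟨hl, hl'⟩ hij hik hil hjk hjl hkl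

def fHom : G3 (n + 1) →* ParityExt n := PresentedGroup.toGroup fun _ => lift_letterImage_eq_one

lemma fHom_of (a : TIdx (n + 1)) : fHom (PresentedGroup.of a) = letterImage a :=
  PresentedGroup.toGroup.of _

end Hom

section Words

open SemidirectProduct

lemma filterMap_zip_range_append_singleton {α γ : Type*} (g : List α → α → Option γ) (l : List α)
    (a : α) :
    ((List.range (l ++ [a]).length).zip (l ++ [a])).filterMap
        (fun x => g ((l ++ [a]).take x.1) x.2) =
      ((List.range l.length).zip l).filterMap (fun x => g (l.take x.1) x.2) ++ (g l a).toList := by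
  have hzip : (List.range (l ++ [a]).length).zip (l ++ [a]) =
      (List.range l.length).zip l ++ [(l.length, a)] := by
    rw [List.length_append, List.length_singleton, List.range_succ, List.zip_append (by simp)]
    rfl
  rw [hzip, List.filterMap_append]
  congr 1
  · refine List.filterMap_congr fun x hx => ?_
    have hlt : x.1 < l.length := List.mem_range.mp (List.of_mem_zip hx).1
    rw [List.take_append_of_le_length hlt.le]
  · cases hga : g l a <;> simp [hga]

def fLetter (n : ℕ) (pre : List (TIdx (n + 1))) (a : TIdx (n + 1)) : Option (TPIdx n) :=
  if a.1.2.2 = n + 1 then none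
  else (tripMkS n a.1.1 a.1.2.1 a.1.2.2).map fun t =>
    (t, ((cnt3 pre a.1.2.1 a.1.2.2 (n + 1) + cnt3 pre a.1.1 a.1.2.2 (n + 1) : ℕ) : ZMod 2))

variable {n : ℕ}

lemma fWord_append_singleton (β : List (TIdx (n + 1))) (a : TIdx (n + 1)) :
    fWord n (β ++ [a]) = fWord n β ++ (fLetter n β a).toList :=
  filterMap_zip_range_append_singleton (fLetter n) β a

def parityVec (β : List (TIdx (n + 1))) : ParityVec :=
  fun p => (cnt3 β p.1 p.2 (n + 1) : ZMod 2)

lemma parityVec_append_singleton (β : List (TIdx (n + 1))) (a : TIdx (n + 1)) :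
    parityVec (β ++ [a]) = parityVec β + topParity a := by
  funext p
  by_cases h : tripSet a = {p.1, p.2, n + 1} <;> simp [parityVec, topParity, cnt3, h]

lemma toGP3_fLetter (β : List (TIdx (n + 1))) (a : TIdx (n + 1)) :
    toGP3 (fLetter n β a).toList = twist (parityVec β) (lowPart a) := by
  have ha := a.2
  by_cases h : a.1.2.2 = n + 1
  · have hlow : ¬ T3ok n a.1 := fun h' => by omega
    simp [fLetter, h, lowPart_of_not_T3ok hlow, toGP3]
  · have hlow : T3ok n a.1 := ⟨ha.1, ha.2.1, ha.2.2.1, by omega⟩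
    have hmk : tripMkS n a.1.1 a.1.2.1 a.1.2.2 = some ⟨a.1, hlow⟩ := by
      rw [tripMkS, dif_pos (by rwa [sort3_of_lt ha.2.1 ha.2.2.1])]
      congr
      exact sort3_of_lt ha.2.1 ha.2.2.1
    rw [lowPart, dif_pos hlow, twist_of]
    simp [fLetter, h, hmk, toGP3, twistLetter, parityShift, parityVec]

lemma toG3_append (β γ : List (TIdx n)) : toG3 (β ++ γ) = toG3 β * toG3 γ := by
  simp [toG3]

lemma toGP3_append (β γ : List (TPIdx n)) : toGP3 (β ++ γ) = toGP3 β * toGP3 γ := by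
  simp [toGP3]

lemma fHom_toG3 (β : List (TIdx (n + 1))) :
    fHom (toG3 β) = inl (toGP3 (fWord n β)) * inr (Multiplicative.ofAdd (parityVec β)) := by
  induction β using List.reverseRecOn with
  | nil =>
    rw [show parityVec (n := n) [] = 0 from funext fun _ => by simp [parityVec, cnt3]]
    simp [toG3, toGP3, fWord]
  | append_singleton β a ih =>
    have hsingle : toG3 [a] = PresentedGroup.of a := by simp [toG3]
    rw [toG3_append, map_mul, ih, hsingle, fHom_of, letterImage, inl_mul_inr_mul_inl_mul_inr,
      twistAction_apply, ← toGP3_fLetter, ← ofAdd_add, ← parityVec_append_singleton,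
      fWord_append_singleton, toGP3_append]

end Words

theorem statement_16_general (n : ℕ)
    (β β' : List (TIdx (n + 1))) (h : toG3 β = toG3 β') :
    toGP3 (fWord n β) = toGP3 (fWord n β') := by
  have himage := congrArg (fun x => (fHom x).left) h
  simpa only [fHom_toG3, SemidirectProduct.mul_left, SemidirectProduct.left_inl,
    SemidirectProduct.left_inr, SemidirectProduct.right_inl, map_one, MulAut.one_apply, mul_one]
    using himage

theorem statement_16 (n : ℕ) (hn : 3 ≤ n)
    (β β' : List (TIdx (n + 1))) (h : toG3 β = toG3 β') :
    toGP3 (fWord n β) = toGP3 (fWord n β') :=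
  statement_16_general n β β' h

end GnkBrunnian
end
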